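/- arXiv:2305.04267 — 3 statements merged into one kernel-verified Lean document; each statement's English description precedes it below -/
import Mathlib

section
/- (Lemma 3, D1–D2 comparison.) Let (W, a, b) and (W*, a*, b*) be parameter triples with a, a* ∈ {−1,1}^r satisfying ‖W‖₀ + ‖b‖₀ + ‖W*‖₀ + ‖b*‖₀ ≤ S, ‖W‖₁ + ‖b‖₁ ≤ ‖W*‖₁ + ‖b*‖₁, and ‖w*_j‖₂² + |b*_j|² ≤ 1 for each j. Then D1((W,a,b),(W*,a*,b*)) ≤ 2·√S·D2((W,a,b),(W*,a*,b*)). -/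
open MeasureTheory ProbabilityTheory Finset Real

noncomputable section

/-- The ReLU function. -/
def relu (v : ℝ) : ℝ := max v 0

/-- Two-layer ReLU network `f_{W,a,b}(x) = ∑_j a_j relu(w_jᵀ x + b_j)`. -/
def nnF {p r : ℕ} (W : Fin p → Fin r → ℝ) (a b : Fin r → ℝ) (x : Fin p → ℝ) : ℝ :=
  ∑ j, a j * relu ((∑ i, W i j * x i) + b j)

/-- Entrywise ℓ¹ norm of a vector. -/
def l1V {p : ℕ} (w : Fin p → ℝ) : ℝ := ∑ i, |w i|

/-- Euclidean norm of a vector. -/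
def l2V {p : ℕ} (w : Fin p → ℝ) : ℝ := Real.sqrt (∑ i, (w i) ^ 2)

/-- ℓ∞ norm of a vector. -/
def linfV {p : ℕ} (w : Fin p → ℝ) : ℝ := ⨆ i, |w i|

/-- Entrywise ℓ¹ norm of a matrix. -/
def l1M {p r : ℕ} (W : Fin p → Fin r → ℝ) : ℝ := ∑ i, ∑ j, |W i j|

/-- Frobenius norm of a matrix. -/
def frobM {p r : ℕ} (W : Fin p → Fin r → ℝ) : ℝ := Real.sqrt (∑ i, ∑ j, (W i j) ^ 2)

open Classical in
/-- Number of nonzero entries of a matrix. -/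
def l0M {p r : ℕ} (W : Fin p → Fin r → ℝ) : ℕ :=
  (Finset.univ.filter (fun ij : Fin p × Fin r => W ij.1 ij.2 ≠ 0)).card

open Classical in
/-- Number of nonzero entries of a vector. -/
def l0V {p : ℕ} (w : Fin p → ℝ) : ℕ :=
  (Finset.univ.filter (fun i : Fin p => w i ≠ 0)).card

open Classical in
/-- Per-neuron distance `d1`. -/
def d1 {p : ℕ} (w : Fin p → ℝ) (a b : ℝ) (w' : Fin p → ℝ) (a' b' : ℝ) : ℝ :=
  if a = a' then l1V (fun i => w i - w' i) + |b - b'|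
  else l1V w + l1V w' + |b| + |b'|

open Classical in
/-- Per-neuron distance `d2`. -/
def d2 {p : ℕ} (w : Fin p → ℝ) (a b : ℝ) (w' : Fin p → ℝ) (a' b' : ℝ) : ℝ :=
  if a = a' then Real.sqrt ((l2V (fun i => w i - w' i)) ^ 2 + |b - b'| ^ 2)
  else 1

/-- `D1` distance: minimum over permutations of the sum of `d1` distances. -/
def D1 {p r : ℕ} (W : Fin p → Fin r → ℝ) (a b : Fin r → ℝ)
    (W' : Fin p → Fin r → ℝ) (a' b' : Fin r → ℝ) : ℝ :=
  Finset.univ.inf' Finset.univ_nonempty fun (σπ : Equiv.Perm (Fin r)) =>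
    ∑ j, d1 (fun i => W i (σπ j)) (a (σπ j)) (b (σπ j)) (fun i => W' i j) (a' j) (b' j)

/-- `D2` distance: minimum over permutations of the square root of the sum of `d2²`. -/
def D2 {p r : ℕ} (W : Fin p → Fin r → ℝ) (a b : Fin r → ℝ)
    (W' : Fin p → Fin r → ℝ) (a' b' : Fin r → ℝ) : ℝ :=
  Real.sqrt (Finset.univ.inf' Finset.univ_nonempty fun (σπ : Equiv.Perm (Fin r)) =>
    ∑ j, (d2 (fun i => W i (σπ j)) (a (σπ j)) (b (σπ j)) (fun i => W' i j) (a' j) (b' j)) ^ 2)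

/-- Standard Gaussian measure `N(0, I_p)` on `ℝ^p`. -/
def stdGaussian (p : ℕ) : Measure (Fin p → ℝ) := Measure.pi fun _ => gaussianReal 0 1

instance (p : ℕ) : IsProbabilityMeasure (stdGaussian p) := by
  unfold _root_.stdGaussian; infer_instance

/-- Law of `n` i.i.d. samples from `N(0, I_p)`. -/
def samples (n p : ℕ) : Measure (Fin n → Fin p → ℝ) := Measure.pi fun _ => stdGaussian p

instance (n p : ℕ) : IsProbabilityMeasure (samples n p) := by
  unfold samples; infer_instance

/-- `a ∈ {−1, 1}^r`. -/
def IsSign {r : ℕ} (a : Fin r → ℝ) : Prop := ∀ j, a j = 1 ∨ a j = -1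

/-- `(Wh, ah, bh)` is a LASSO minimizer for data `(X, y)` at noise level `σ`. -/
def IsLasso {n p r : ℕ} (X : Fin n → Fin p → ℝ) (y : Fin n → ℝ) (σ : ℝ)
    (Wh : Fin p → Fin r → ℝ) (ah bh : Fin r → ℝ) : Prop :=
  IsSign ah ∧
  (1 / (n : ℝ)) * ∑ i, (y i - nnF Wh ah bh (X i)) ^ 2 ≤ σ ^ 2 ∧
  ∀ (W : Fin p → Fin r → ℝ) (a b : Fin r → ℝ), IsSign a →
    (1 / (n : ℝ)) * ∑ i, (y i - nnF W a b (X i)) ^ 2 ≤ σ ^ 2 →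
    l1M Wh ≤ l1M W

/-- Assumption 1 of the paper. -/
def Assumption1 {p r : ℕ} (B ω : ℝ) (Ws : Fin p → Fin r → ℝ) (bs : Fin r → ℝ) : Prop :=
  1 ≤ B ∧ 0 < ω ∧
  (∀ j, 1 ≤ l2V (fun i => Ws i j) ∧ l2V (fun i => Ws i j) ≤ B ∧ |bs j| ≤ B) ∧
  ∀ j k, j ≠ k →
    |∑ i, Ws i j * Ws i k| / (l2V (fun i => Ws i j) * l2V (fun i => Ws i k)) ≤ (r : ℝ) ^ (-ω)

/-!
Fix a permutation `σ` attaining `D2` and view each neuron as the vector `u` of its weights with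
the bias adjoined (`v` for the matched target neuron). The key per-neuron bound is
`d1 + ‖v‖₁ - ‖u‖₁ ≤ 2 √(‖u‖₀ + ‖v‖₀) · d2`: with equal signs, `‖v‖₁ - ‖u‖₁ ≤ ‖u - v‖₁ = d1`, and
Cauchy–Schwarz on the support of `u - v` gives `‖u - v‖₁ ≤ √‖u - v‖₀ · ‖u - v‖₂`; with different
signs the left side is `2‖v‖₁ ≤ 2 √‖v‖₀ · ‖v‖₂ ≤ 2 √‖v‖₀` while `d2 = 1`. By the `ℓ¹` hypothesis
the corrections `‖v‖₁ - ‖u‖₁` have nonnegative sum, so summing over neurons and applying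
Cauchy–Schwarz once more gives `D1 ≤ 2 √S · D2`.
-/

section SparseVectors

variable {ι : Type*} [Fintype ι]

theorem sum_abs_le_sqrt_card_mul_sqrt_sum_sq (v : ι → ℝ) :
    ∑ i, |v i| ≤ √(#{i | v i ≠ 0} : ℝ) * √(∑ i, v i ^ 2) := by
  have hsupp {f : ι → ℝ} (hf : ∀ i, v i = 0 → f i = 0) : ∑ i with v i ≠ 0, f i = ∑ i, f i :=
    sum_filter_of_ne fun i _ hi => fun h => hi (hf i h)
  calc ∑ i, |v i| = ∑ i with v i ≠ 0, 1 * |v i| := by simp [hsupp]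
    _ ≤ √(∑ i with v i ≠ 0, 1 ^ 2) * √(∑ i with v i ≠ 0, |v i| ^ 2) :=
        Real.sum_mul_le_sqrt_mul_sqrt _ _ _
    _ = √(#{i | v i ≠ 0} : ℝ) * √(∑ i, v i ^ 2) := by simp [hsupp]

theorem sum_abs_le_sqrt_card_of_sum_sq_le_one {v : ι → ℝ} (hv : ∑ i, v i ^ 2 ≤ 1) :
    ∑ i, |v i| ≤ √(#{i | v i ≠ 0} : ℝ) :=
  (sum_abs_le_sqrt_card_mul_sqrt_sum_sq v).trans <|
    mul_le_of_le_one_right (Real.sqrt_nonneg _) (Real.sqrt_le_one.2 hv)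

theorem card_sub_ne_zero_le (u v : ι → ℝ) :
    #{i | u i - v i ≠ 0} ≤ #{i | u i ≠ 0} + #{i | v i ≠ 0} := by
  classical
  refine (card_le_card fun i => ?_).trans (card_union_le _ _)
  simp only [mem_filter, mem_univ, true_and, mem_union]
  contrapose!
  rintro ⟨hu, hv⟩
  simp [hu, hv]

theorem sum_abs_sub_add_sum_abs_sub_le (u v : ι → ℝ) :
    ∑ i, |u i - v i| + (∑ i, |v i| - ∑ i, |u i|) ≤
      2 * √(#{i | u i ≠ 0} + #{i | v i ≠ 0} : ℝ) * √(∑ i, (u i - v i) ^ 2) := by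
  have htriangle : ∑ i, |v i| ≤ ∑ i, |u i| + ∑ i, |u i - v i| := by
    rw [← sum_add_distrib]
    exact sum_le_sum fun i _ => by simpa using abs_sub (u i) (u i - v i)
  have hcard : (#{i | u i - v i ≠ 0} : ℝ) ≤ #{i | u i ≠ 0} + #{i | v i ≠ 0} := by
    exact_mod_cast card_sub_ne_zero_le u v
  calc ∑ i, |u i - v i| + (∑ i, |v i| - ∑ i, |u i|) ≤ 2 * ∑ i, |u i - v i| := by linarith
    _ ≤ 2 * (√(#{i | u i - v i ≠ 0} : ℝ) * √(∑ i, (u i - v i) ^ 2)) := by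
        gcongr; exact sum_abs_le_sqrt_card_mul_sqrt_sum_sq _
    _ ≤ _ := by rw [← mul_assoc]; gcongr

theorem sum_le_two_mul_sqrt_mul_sqrt_sum_sq {f ε n g : ι → ℝ} {S : ℝ} (hε : 0 ≤ ∑ i, ε i)
    (hn : ∀ i, 0 ≤ n i) (hg : ∀ i, 0 ≤ g i) (hnS : ∑ i, n i ≤ S)
    (hfg : ∀ i, f i + ε i ≤ 2 * √(n i) * g i) :
    ∑ i, f i ≤ 2 * √S * √(∑ i, g i ^ 2) := by
  have hcs : ∑ i, √(n i) * g i ≤ √(∑ i, n i) * √(∑ i, g i ^ 2) := by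
    simpa [Real.sqrt_sq (hg _)] using Real.sum_sqrt_mul_sqrt_le univ hn fun i => sq_nonneg (g i)
  calc ∑ i, f i ≤ ∑ i, (f i + ε i) := by rw [sum_add_distrib]; linarith
    _ ≤ ∑ i, 2 * (√(n i) * g i) := sum_le_sum fun i _ => (hfg i).trans_eq (mul_assoc ..)
    _ ≤ 2 * (√(∑ i, n i) * √(∑ i, g i ^ 2)) := by rw [← mul_sum]; gcongr
    _ ≤ 2 * √S * √(∑ i, g i ^ 2) := by rw [← mul_assoc]; gcongr

end SparseVectors

def withBias {p : ℕ} (w : Fin p → ℝ) (b : ℝ) : Option (Fin p) → ℝ := fun o => o.elim b w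

section WithBias

variable {p : ℕ} (w w' : Fin p → ℝ) (b b' : ℝ)

theorem sum_abs_withBias : ∑ o, |withBias w b o| = l1V w + |b| := by
  simp [withBias, Fintype.sum_option, l1V, add_comm]

theorem sum_sq_withBias : ∑ o, withBias w b o ^ 2 = l2V w ^ 2 + |b| ^ 2 := by
  simp [withBias, Fintype.sum_option, l2V, add_comm,
    Real.sq_sqrt (sum_nonneg fun i _ => sq_nonneg (w i))]

theorem withBias_sub_withBias (o : Option (Fin p)) :
    withBias w b o - withBias w' b' o = withBias (fun i => w i - w' i) (b - b') o := by
  cases o <;> rfl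

theorem d1_eq_withBias (a a' : ℝ) : d1 w a b w' a' b' =
    if a = a' then ∑ o, |withBias w b o - withBias w' b' o|
    else ∑ o, |withBias w b o| + ∑ o, |withBias w' b' o| := by
  simp only [d1, withBias_sub_withBias, sum_abs_withBias]
  split_ifs <;> ring

theorem d2_eq_withBias (a a' : ℝ) : d2 w a b w' a' b' =
    if a = a' then √(∑ o, (withBias w b o - withBias w' b' o) ^ 2) else 1 := by
  simp only [d2, withBias_sub_withBias, sum_sq_withBias]

theorem d2_nonneg (a a' : ℝ) : 0 ≤ d2 w a b w' a' b' := by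
  unfold d2; split_ifs <;> positivity

theorem d1_add_l1_sub_l1_le (a a' : ℝ) (h' : l2V w' ^ 2 + |b'| ^ 2 ≤ 1) :
    d1 w a b w' a' b' + ((l1V w' + |b'|) - (l1V w + |b|)) ≤
      2 * √(#{o | withBias w b o ≠ 0} + #{o | withBias w' b' o ≠ 0} : ℝ) *
        d2 w a b w' a' b' := by
  rw [d1_eq_withBias, d2_eq_withBias, ← sum_abs_withBias w, ← sum_abs_withBias w']
  split_ifs
  · exact sum_abs_sub_add_sum_abs_sub_le _ _
  · have hv := sum_abs_le_sqrt_card_of_sum_sq_le_one ((sum_sq_withBias w' b').trans_le h')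
    have hmono : √(#{o | withBias w' b' o ≠ 0} : ℝ) ≤
        √(#{o | withBias w b o ≠ 0} + #{o | withBias w' b' o ≠ 0} : ℝ) :=
      Real.sqrt_le_sqrt (le_add_of_nonneg_left (Nat.cast_nonneg _))
    linarith

end WithBias

section Columns

variable {p r : ℕ} (W : Fin p → Fin r → ℝ) (b : Fin r → ℝ)

theorem sum_l1V_add_abs : ∑ j, (l1V (fun i => W i j) + |b j|) = l1M W + l1V b := by
  rw [sum_add_distrib, l1M, sum_comm]
  rfl

theorem sum_card_withBias_ne_zero :
    ∑ j, #{o | withBias (fun i => W i j) (b j) o ≠ 0} = l0M W + l0V b := by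
  change _ = #{ij : Fin p × Fin r | W ij.1 ij.2 ≠ 0} + #{j | b j ≠ 0}
  simp_rw [card_filter, Fintype.sum_option, sum_add_distrib]
  rw [← univ_product_univ, sum_product, sum_comm (s := univ (α := Fin p)), add_comm]
  rfl

end Columns

theorem D1_le_D2_general (p r S : ℕ) (W Ws : Fin p → Fin r → ℝ) (a as b bs : Fin r → ℝ)
    (hS : l0M W + l0V b + l0M Ws + l0V bs ≤ S)
    (hl1 : l1M W + l1V b ≤ l1M Ws + l1V bs)
    (hnorm : ∀ j, (l2V fun i => Ws i j) ^ 2 + |bs j| ^ 2 ≤ 1) :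
    D1 W a b Ws as bs ≤ 2 * Real.sqrt (S : ℝ) * D2 W a b Ws as bs := by
  obtain ⟨σ, -, hσ⟩ := exists_mem_eq_inf' univ_nonempty fun τ : Equiv.Perm (Fin r) =>
    ∑ j, d2 (fun i => W i (τ j)) (a (τ j)) (b (τ j)) (fun i => Ws i j) (as j) (bs j) ^ 2
  have hl1σ : 0 ≤ ∑ j,
      ((l1V (fun i => Ws i j) + |bs j|) - (l1V (fun i => W i (σ j)) + |b (σ j)|)) := by
    rw [sum_sub_distrib, sum_l1V_add_abs, Equiv.sum_comp σ fun j => l1V (fun i => W i j) + |b j|,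
      sum_l1V_add_abs]
    linarith
  have hSσ : ∑ j, ((#{o | withBias (fun i => W i (σ j)) (b (σ j)) o ≠ 0} : ℝ) +
      #{o | withBias (fun i => Ws i j) (bs j) o ≠ 0}) ≤ S := by
    rw [sum_add_distrib,
      Equiv.sum_comp σ fun j => (#{o | withBias (fun i => W i j) (b j) o ≠ 0} : ℝ)]
    norm_cast
    rw [sum_card_withBias_ne_zero, sum_card_withBias_ne_zero]
    omega
  calc D1 W a b Ws as bs ≤ _ := inf'_le _ (mem_univ σ)
    _ ≤ 2 * √S * D2 W a b Ws as bs := by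
        rw [D2, hσ]
        exact sum_le_two_mul_sqrt_mul_sqrt_sum_sq hl1σ (fun j => by positivity)
          (fun j => d2_nonneg ..) hSσ fun j => d1_add_l1_sub_l1_le _ _ _ _ _ _ (hnorm j)

/-- Lemma 3 (D1–D2 comparison). -/
theorem D1_le_D2 (p r S : ℕ) (W Ws : Fin p → Fin r → ℝ) (a as b bs : Fin r → ℝ)
    (ha : IsSign a) (has : IsSign as)
    (hS : l0M W + l0V b + l0M Ws + l0V bs ≤ S)
    (hl1 : l1M W + l1V b ≤ l1M Ws + l1V bs)
    (hnorm : ∀ j, (l2V fun i => Ws i j) ^ 2 + |bs j| ^ 2 ≤ 1) :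
    D1 W a b Ws as bs ≤ 2 * Real.sqrt (S : ℝ) * D2 W a b Ws as bs :=
  D1_le_D2_general p r S W Ws a as b bs hS hl1 hnorm
end
end

section
/- (Pointwise Lipschitz-type bound in D1.) For any two parameter triples (W, a, b) and (W', a', b') with W, W' ∈ ℝ^{p×r}, a, a' ∈ {−1,1}^r, b, b' ∈ ℝ^r, and any x ∈ ℝ^p: |f_{W,a,b}(x) − f_{W',a',b'}(x)| ≤ D1((W,a,b),(W',a',b'))·max{‖x‖_∞, 1}. -/
open MeasureTheory ProbabilityTheory Finset Real

noncomputable section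

/-!
On a fixed input with `‖x‖_∞ ≤ M`, `M ≥ 1`, a single neuron `a relu(wᵀx + b)` moves by at most
`d1 · M` when its parameters change: for equal signs because `relu` is 1-Lipschitz and
`|wᵀx + b| ≤ (‖w‖₁ + |b|) M`, for opposite signs by bounding both neurons separately. Matching the
neurons along a permutation attaining the minimum in `D1` and summing gives the bound.
-/

lemma abs_le_linfV {p : ℕ} (x : Fin p → ℝ) (i : Fin p) : |x i| ≤ linfV x :=
  le_ciSup (Finite.bddAbove_range fun i => |x i|) i

lemma abs_relu_sub_relu_le (s t : ℝ) : |relu s - relu t| ≤ |s - t| :=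
  abs_max_sub_max_le_abs s t 0

lemma abs_relu_le (t : ℝ) : |relu t| ≤ |t| := by
  simpa [relu] using abs_relu_sub_relu_le t 0

section FixedInput

variable {p : ℕ} {x : Fin p → ℝ} {M : ℝ}

lemma abs_sum_mul_le_l1V_mul (hx : ∀ i, |x i| ≤ M) (v : Fin p → ℝ) :
    |∑ i, v i * x i| ≤ l1V v * M :=
  calc |∑ i, v i * x i| ≤ ∑ i, |v i| * |x i| := by
        simpa only [abs_mul] using abs_sum_le_sum_abs (fun i => v i * x i) univ
    _ ≤ ∑ i, |v i| * M := by gcongr with i; exact hx i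
    _ = l1V v * M := by rw [l1V, sum_mul]

lemma abs_affine_le (hx : ∀ i, |x i| ≤ M) (hM : 1 ≤ M) (w : Fin p → ℝ) (b : ℝ) :
    |∑ i, w i * x i + b| ≤ (l1V w + |b|) * M :=
  calc |∑ i, w i * x i + b| ≤ |∑ i, w i * x i| + |b| := abs_add_le _ _
    _ ≤ l1V w * M + |b| * M := by
        gcongr
        · exact abs_sum_mul_le_l1V_mul hx w
        · exact le_mul_of_one_le_right (abs_nonneg b) hM
    _ = (l1V w + |b|) * M := by ring

def neuron (w : Fin p → ℝ) (a b : ℝ) (x : Fin p → ℝ) : ℝ := a * relu (∑ i, w i * x i + b)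

lemma abs_neuron_le (hx : ∀ i, |x i| ≤ M) (hM : 1 ≤ M) (w : Fin p → ℝ) {a : ℝ}
    (ha : |a| ≤ 1) (b : ℝ) : |neuron w a b x| ≤ (l1V w + |b|) * M :=
  calc |neuron w a b x| ≤ 1 * |∑ i, w i * x i + b| := by
        rw [neuron, abs_mul]
        exact mul_le_mul ha (abs_relu_le _) (abs_nonneg _) zero_le_one
    _ ≤ (l1V w + |b|) * M := by rw [one_mul]; exact abs_affine_le hx hM w b

lemma abs_neuron_sub_neuron_le (hx : ∀ i, |x i| ≤ M) (hM : 1 ≤ M) (w w' : Fin p → ℝ)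
    {a a' : ℝ} (ha : |a| ≤ 1) (ha' : |a'| ≤ 1) (b b' : ℝ) :
    |neuron w a b x - neuron w' a' b' x| ≤ d1 w a b w' a' b' * M := by
  by_cases haa' : a = a'
  · subst haa'
    have hdiff : (∑ i, w i * x i + b) - (∑ i, w' i * x i + b') =
        ∑ i, (w i - w' i) * x i + (b - b') := by
      simp only [sub_mul, sum_sub_distrib]; ring
    calc |neuron w a b x - neuron w' a b' x|
        ≤ 1 * |(∑ i, w i * x i + b) - (∑ i, w' i * x i + b')| := by
          rw [neuron, neuron, ← mul_sub, abs_mul]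
          exact mul_le_mul ha (abs_relu_sub_relu_le _ _) (abs_nonneg _) zero_le_one
      _ ≤ (l1V (fun i => w i - w' i) + |b - b'|) * M := by
          rw [one_mul, hdiff]; exact abs_affine_le hx hM _ _
      _ = d1 w a b w' a b' * M := by rw [d1, if_pos rfl]
  · calc |neuron w a b x - neuron w' a' b' x|
        ≤ |neuron w a b x| + |neuron w' a' b' x| := abs_sub _ _
      _ ≤ (l1V w + |b|) * M + (l1V w' + |b'|) * M :=
          add_le_add (abs_neuron_le hx hM w ha b) (abs_neuron_le hx hM w' ha' b')
      _ = d1 w a b w' a' b' * M := by rw [d1, if_neg haa']; ring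

end FixedInput

lemma IsSign.abs_le_one {r : ℕ} {a : Fin r → ℝ} (ha : IsSign a) (j : Fin r) : |a j| ≤ 1 := by
  rcases ha j with h | h <;> simp [h]

/-- pointwise Lipschitz-type bound in D1. -/
theorem pointwise_D1_bound (p r : ℕ) (W W' : Fin p → Fin r → ℝ)
    (a a' b b' : Fin r → ℝ) (ha : IsSign a) (ha' : IsSign a') (x : Fin p → ℝ) :
    |nnF W a b x - nnF W' a' b' x| ≤ D1 W a b W' a' b' * max (linfV x) 1 := by
  set M := max (linfV x) 1
  have hx : ∀ i, |x i| ≤ M := fun i => (abs_le_linfV x i).trans (le_max_left _ _)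
  obtain ⟨σ, -, hσ⟩ := exists_mem_eq_inf' univ_nonempty fun σ : Equiv.Perm (Fin r) =>
    ∑ j, d1 (fun i => W i (σ j)) (a (σ j)) (b (σ j)) (fun i => W' i j) (a' j) (b' j)
  have hreindex : nnF W a b x = ∑ j, neuron (fun i => W i (σ j)) (a (σ j)) (b (σ j)) x :=
    (Equiv.sum_comp σ fun j => neuron (fun i => W i j) (a j) (b j) x).symm
  calc |nnF W a b x - nnF W' a' b' x|
      = |∑ j, (neuron (fun i => W i (σ j)) (a (σ j)) (b (σ j)) x
          - neuron (fun i => W' i j) (a' j) (b' j) x)| := by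
        rw [hreindex, sum_sub_distrib]; rfl
    _ ≤ ∑ j, d1 (fun i => W i (σ j)) (a (σ j)) (b (σ j)) (fun i => W' i j) (a' j) (b' j) * M :=
        (abs_sum_le_sum_abs _ _).trans <| sum_le_sum fun j _ =>
          abs_neuron_sub_neuron_le hx (le_max_right _ _) _ _
            (ha.abs_le_one (σ j)) (ha'.abs_le_one j) _ _
    _ = D1 W a b W' a' b' * M := by rw [← sum_mul, D1, hσ]
end
end

section
/- (Shelling inequality.) Let w ∈ ℝ^p, let s ≥ 1 be an integer, and partition {1,…,p} into groups S_1, …, S_L, each of cardinality s except possibly S_L, such that every entry of w indexed in S_j has absolute value at least that of every entry indexed in S_k whenever j < k. Then (Σ_{l=1}^L ‖w_{S_l}‖₂)² ≤ 2·‖w‖₂² + (2·(1 + log L)²/s)·‖w‖₁², where w_{S_l} denotes the restriction of w to the coordinates in S_l. In particular, ‖w_{S_l}‖₂ ≤ ‖w‖₁/((l−1)·√s) for every l ≥ 2. -/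
/-!
An entry of the shell `S l` (shells counted from `0`) is dominated in absolute value by each of
the `l * s` entries of the earlier shells, so it is at most `‖w‖₁ / (l s)`; since `S l` has at most
`s` entries, `‖w_{S l}‖₂ ≤ ‖w‖₁ / (l √s)`. The first shell is bounded by `‖w‖₂`, the remaining
ones sum to at most `‖w‖₁ / √s` times a harmonic sum `≤ 1 + log L`, and
`(a + b)² ≤ 2a² + 2b²` finishes the proof.
-/

open MeasureTheory ProbabilityTheory Finset Real

noncomputable section

section Shelling

open Function

variable {ι : Type*} [Fintype ι]

theorem card_mul_abs_le_sum_abs (w : ι → ℝ) (T : Finset ι) (i : ι)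
    (hT : ∀ j ∈ T, |w i| ≤ |w j|) : (T.card : ℝ) * |w i| ≤ ∑ j, |w j| :=
  calc (T.card : ℝ) * |w i| = ∑ _j ∈ T, |w i| := by rw [sum_const, nsmul_eq_mul]
    _ ≤ ∑ j ∈ T, |w j| := sum_le_sum hT
    _ ≤ ∑ j, |w j| := sum_le_univ_sum_of_nonneg fun j => abs_nonneg _

theorem mul_mul_abs_le_sum_abs_of_mem_shell {L s : ℕ} (w : ι → ℝ) (S : Fin L → Finset ι)
    (hdisj : Pairwise (Disjoint on S)) (hcard : ∀ l : Fin L, (l : ℕ) < L - 1 → (S l).card = s)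
    (horder : ∀ l l' : Fin L, l < l' → ∀ i ∈ S l, ∀ i' ∈ S l', |w i'| ≤ |w i|)
    {l : Fin L} {i : ι} (hi : i ∈ S l) : (l : ℝ) * s * |w i| ≤ ∑ j, |w j| := by
  classical
  have hcard_before : ((Iio l).biUnion S).card = (l : ℕ) * s := by
    rw [card_biUnion fun k _ k' _ hkk' => hdisj hkk', sum_congr rfl fun k hk => hcard k ?_]
    · simp [Fin.card_Iio]
    · have := mem_Iio.mp hk
      omega
  have hdominate : ∀ j ∈ (Iio l).biUnion S, |w i| ≤ |w j| := by
    intro j hj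
    obtain ⟨k, hk, hjk⟩ := mem_biUnion.mp hj
    exact horder k l (mem_Iio.mp hk) j hjk i hi
  simpa [hcard_before] using card_mul_abs_le_sum_abs w _ i hdominate

theorem sqrt_sum_sq_shell_le {L s : ℕ} (w : ι → ℝ) (S : Fin L → Finset ι)
    (hdisj : Pairwise (Disjoint on S)) (hcard : ∀ l : Fin L, (l : ℕ) < L - 1 → (S l).card = s)
    (hcardle : ∀ l : Fin L, (S l).card ≤ s)
    (horder : ∀ l l' : Fin L, l < l' → ∀ i ∈ S l, ∀ i' ∈ S l', |w i'| ≤ |w i|)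
    {l : Fin L} (hl : 1 ≤ (l : ℕ)) :
    √(∑ i ∈ S l, w i ^ 2) ≤ (∑ j, |w j|) / ((l : ℕ) * √(s : ℝ)) := by
  set A := ∑ j, |w j|
  have hentry : ∀ i ∈ S l, w i ^ 2 ≤ (A / ((l : ℕ) * s)) ^ 2 := by
    intro i hi
    have hs : 1 ≤ s := (card_pos.mpr ⟨i, hi⟩).trans_le (hcardle l)
    have habs : |w i| ≤ A / ((l : ℕ) * s) := by
      rw [le_div_iff₀ (by positivity)]
      linarith [mul_mul_abs_le_sum_abs_of_mem_shell w S hdisj hcard horder hi]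
    simpa only [sq_abs] using pow_le_pow_left₀ (abs_nonneg _) habs 2
  have hscale : (s : ℝ) * (A / ((l : ℕ) * s)) ^ 2 = (A / ((l : ℕ) * √(s : ℝ))) ^ 2 := by
    rcases eq_or_ne s 0 with rfl | hs
    · simp
    · field_simp
      rw [sq_sqrt (Nat.cast_nonneg s)]
      ring
  refine (sqrt_le_sqrt ?_).trans_eq (sqrt_sq (by positivity))
  calc ∑ i ∈ S l, w i ^ 2 ≤ (S l).card * (A / ((l : ℕ) * s)) ^ 2 := by
        simpa using sum_le_card_nsmul _ _ _ hentry
    _ ≤ s * (A / ((l : ℕ) * s)) ^ 2 := by gcongr; exact_mod_cast hcardle l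
    _ = _ := hscale

end Shelling

theorem sum_inv_succ_le_one_add_log (m : ℕ) :
    ∑ i : Fin m, ((i : ℝ) + 1)⁻¹ ≤ 1 + log (m + 1) := by
  have hsum : ∑ i : Fin m, ((i : ℝ) + 1)⁻¹ = harmonic m := by
    simp [harmonic, Fin.sum_univ_eq_sum_range (fun i => ((i : ℝ) + 1)⁻¹)]
  calc ∑ i : Fin m, ((i : ℝ) + 1)⁻¹ = harmonic m := hsum
    _ ≤ harmonic (m + 1) := by
      rw [harmonic_succ, Rat.cast_add]
      exact le_add_of_nonneg_right (by positivity)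
    _ ≤ 1 + log (m + 1) := by exact_mod_cast harmonic_le_one_add_log (m + 1)

theorem sq_sum_le_of_le_div_index {L : ℕ} (f : Fin L → ℝ) {a c : ℝ} (hf : ∀ l, 0 ≤ f l)
    (hc : 0 ≤ c) (hf_zero : ∀ l : Fin L, (l : ℕ) = 0 → f l ≤ a)
    (hf_pos : ∀ l : Fin L, 1 ≤ (l : ℕ) → f l ≤ c / l) :
    (∑ l, f l) ^ 2 ≤ 2 * a ^ 2 + 2 * (1 + log L) ^ 2 * c ^ 2 := by
  cases L with
  | zero => simp; positivity
  | succ m =>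
    set tail := ∑ i : Fin m, f i.succ
    have htail : tail ≤ c * (1 + log (m + 1)) :=
      calc tail ≤ ∑ i : Fin m, c * ((i : ℝ) + 1)⁻¹ := by
            refine sum_le_sum fun i _ => ?_
            simpa [div_eq_mul_inv] using hf_pos i.succ (by simp)
        _ ≤ c * (1 + log (m + 1)) := by
            rw [← mul_sum]; exact mul_le_mul_of_nonneg_left (sum_inv_succ_le_one_add_log m) hc
    have h0 : f 0 ≤ a := hf_zero 0 rfl
    have htail_nonneg : 0 ≤ tail := sum_nonneg fun i _ => hf _
    calc (∑ l, f l) ^ 2 = (f 0 + tail) ^ 2 := by rw [Fin.sum_univ_succ]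
      _ ≤ 2 * (f 0 ^ 2 + tail ^ 2) := add_sq_le
      _ ≤ 2 * (a ^ 2 + (c * (1 + log (m + 1))) ^ 2) := by gcongr; exact hf 0
      _ = _ := by push_cast; ring

theorem shelling_inequality_general (p L s : ℕ) (w : Fin p → ℝ)
    (S : Fin L → Finset (Fin p))
    (hdisj : ∀ l l' : Fin L, l ≠ l' → Disjoint (S l) (S l'))
    (hcard : ∀ l : Fin L, (l : ℕ) < L - 1 → (S l).card = s)
    (hcardle : ∀ l : Fin L, (S l).card ≤ s)
    (horder : ∀ l l' : Fin L, l < l' → ∀ i ∈ S l, ∀ i' ∈ S l', |w i'| ≤ |w i|) :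
    ((∑ l, Real.sqrt (∑ i ∈ S l, (w i) ^ 2)) ^ 2 ≤
        2 * (l2V w) ^ 2 + 2 * (1 + Real.log (L : ℝ)) ^ 2 / (s : ℝ) * (l1V w) ^ 2) ∧
      ∀ l : Fin L, 1 ≤ (l : ℕ) →
        Real.sqrt (∑ i ∈ S l, (w i) ^ 2) ≤ l1V w / ((l : ℕ) * Real.sqrt (s : ℝ)) := by
  have hshell : ∀ l : Fin L, 1 ≤ (l : ℕ) →
      √(∑ i ∈ S l, w i ^ 2) ≤ l1V w / (l * √(s : ℝ)) :=
    fun l => sqrt_sum_sq_shell_le w S (fun l l' => hdisj l l') hcard hcardle horder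
  refine ⟨?_, hshell⟩
  have hfirst : ∀ l : Fin L, √(∑ i ∈ S l, w i ^ 2) ≤ l2V w := fun l =>
    sqrt_le_sqrt (sum_le_univ_sum_of_nonneg fun _ => sq_nonneg _)
  have hl1 : 0 ≤ l1V w / √(s : ℝ) :=
    div_nonneg (sum_nonneg fun _ _ => abs_nonneg _) (sqrt_nonneg _)
  calc _ ≤ 2 * l2V w ^ 2 + 2 * (1 + log L) ^ 2 * (l1V w / √(s : ℝ)) ^ 2 :=
        sq_sum_le_of_le_div_index _ (fun _ => sqrt_nonneg _) hl1 (fun l _ => hfirst l)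
          fun l hl => (hshell l hl).trans_eq (by rw [div_div, mul_comm])
    _ = _ := by rw [div_pow, sq_sqrt (Nat.cast_nonneg s)]; ring

/-- shelling inequality. -/
theorem shelling_inequality (p L s : ℕ) (hs : 1 ≤ s) (hL : 1 ≤ L) (w : Fin p → ℝ)
    (S : Fin L → Finset (Fin p))
    (hdisj : ∀ l l' : Fin L, l ≠ l' → Disjoint (S l) (S l'))
    (hcover : ∀ i : Fin p, ∃ l, i ∈ S l)
    (hcard : ∀ l : Fin L, (l : ℕ) < L - 1 → (S l).card = s)
    (hcardle : ∀ l : Fin L, (S l).card ≤ s)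
    (horder : ∀ l l' : Fin L, l < l' → ∀ i ∈ S l, ∀ i' ∈ S l', |w i'| ≤ |w i|) :
    ((∑ l, Real.sqrt (∑ i ∈ S l, (w i) ^ 2)) ^ 2 ≤
        2 * (l2V w) ^ 2 + 2 * (1 + Real.log (L : ℝ)) ^ 2 / (s : ℝ) * (l1V w) ^ 2) ∧
      ∀ l : Fin L, 1 ≤ (l : ℕ) →
        Real.sqrt (∑ i ∈ S l, (w i) ^ 2) ≤ l1V w / ((l : ℕ) * Real.sqrt (s : ℝ)) :=
  shelling_inequality_general p L s w S hdisj hcard hcardle horder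
end
end
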